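/- Let A be a commutative ℂ-algebra equipped with a ℂ-bilinear antisymmetric bracket {·,·} : A × A → A. Let n ≥ 1, N ≥ 1, let r : ℂ×ℂ → M_{n²}(ℂ) be skew-symmetric, i.e. P·r(μ,λ)·P = −r(λ,μ) for all λ,μ, let τ : ℂ → ℂ, g^{(0)},…,g^{(N−1)} : ℂ → ℂ with g^{(0)} ≡ 1, and let k : ℂ → GL_n(ℂ) satisfy the N-reflection equation for r. Let L : ℂ → M_n(A) satisfy the linear Poisson relation {L_a(λ), L_b(μ)} = [r_{ab}(λ,μ), L_a(λ) + L_b(μ)] for all λ,μ (brackets taken entrywise, complex matrices regarded as A-valued). Define B(λ) = ∑_{j=0}^{N−1} g^{(j)}(λ)·k^{(j)}(λ)·L(τ^j(λ))·(k^{(j)}(λ))^{−1} and r̄_{ab}(λ,ν) = ∑_{j=0}^{N−1} g^{(j)}(ν)·k^{(j)}_b(ν)·r(λ,τ^j(ν))·(k^{(j)}_b(ν))^{−1}. Then for all λ,μ: {B_a(λ), B_b(μ)} = [r̄_{ab}(λ,μ), B_a(λ)] − [r̄_{ba}(μ,λ), B_b(μ)], where r̄_{ba}(μ,λ) = P·r̄_{ab}(μ,λ)·P.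 -/

import Mathlib

open Matrix Kronecker

noncomputable section

variable {A : Type*} [CommRing A] [Algebra ℂ A]

/-- `x_a = x ⊗ 1`, acting on the tensor square. -/
def legA {R : Type*} [CommRing R] (n : ℕ) (x : Matrix (Fin n) (Fin n) R) :
    Matrix (Fin n × Fin n) (Fin n × Fin n) R :=
  x ⊗ₖ (1 : Matrix (Fin n) (Fin n) R)

/-- `x_b = 1 ⊗ x`, acting on the tensor square. -/
def legB {R : Type*} [CommRing R] (n : ℕ) (x : Matrix (Fin n) (Fin n) R) :
    Matrix (Fin n × Fin n) (Fin n × Fin n) R :=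
  (1 : Matrix (Fin n) (Fin n) R) ⊗ₖ x

/-- The swap (permutation) matrix `P : P(u ⊗ v) = v ⊗ u`. -/
def Pmat (n : ℕ) : Matrix (Fin n × Fin n) (Fin n × Fin n) ℂ :=
  Matrix.of fun i j => if i.1 = j.2 ∧ i.2 = j.1 then 1 else 0

/-- `k⁽ʲ⁾(ν) = k⁽ʲ⁻¹⁾(ν) · k(τʲ⁻¹(ν))`, with `k⁽⁰⁾ = 1`. -/
def kiter {n : ℕ} (k : ℂ → Matrix (Fin n) (Fin n) ℂ) (τ : ℂ → ℂ) :
    ℕ → ℂ → Matrix (Fin n) (Fin n) ℂ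
  | 0, _ => 1
  | j + 1, ν => kiter k τ j ν * k (τ^[j] ν)

/-- `r̄_{ab}(λ,ν) = ∑_{j<N} g⁽ʲ⁾(ν) k⁽ʲ⁾_b(ν) r(λ, τʲ(ν)) (k⁽ʲ⁾_b(ν))⁻¹`. -/
def rbar (n N : ℕ) (r : ℂ → ℂ → Matrix (Fin n × Fin n) (Fin n × Fin n) ℂ)
    (τ : ℂ → ℂ) (g : ℕ → ℂ → ℂ) (k : ℂ → Matrix (Fin n) (Fin n) ℂ)
    (lam ν : ℂ) : Matrix (Fin n × Fin n) (Fin n × Fin n) ℂ :=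
  ∑ j ∈ Finset.range N,
    g j ν • (legB n (kiter k τ j ν) * r lam (τ^[j] ν) * (legB n (kiter k τ j ν))⁻¹)

/-- The classical `N`-reflection equation in compact form. -/
def NRefl (n N : ℕ) (r : ℂ → ℂ → Matrix (Fin n × Fin n) (Fin n × Fin n) ℂ)
    (τ : ℂ → ℂ) (g : ℕ → ℂ → ℂ) (k : ℂ → Matrix (Fin n) (Fin n) ℂ) : Prop :=
  ∀ lam ν : ℂ,
    rbar n N r τ g k lam ν * legA n (k lam) = legA n (k lam) * rbar n N r τ g k (τ lam) ν

/-- A complex matrix regarded as a matrix with entries in the algebra `A`. -/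
def cm (A : Type*) [CommRing A] [Algebra ℂ A] {m : Type*} (X : Matrix m m ℂ) :
    Matrix m m A :=
  X.map (algebraMap ℂ A)

/-- `{X_a, Y_b}` : the `n²×n²` matrix over `A` with `((i,k),(j,l))` entry `{X_{ij}, Y_{kl}}`. -/
def braMat (A : Type*) [CommRing A] [Algebra ℂ A] (br : A →ₗ[ℂ] A →ₗ[ℂ] A) {n : ℕ}
    (X Y : Matrix (Fin n) (Fin n) A) : Matrix (Fin n × Fin n) (Fin n × Fin n) A :=
  Matrix.of fun i j => br (X i.1 j.1) (Y i.2 j.2)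

/-- `B(λ) = ∑_{j<N} g⁽ʲ⁾(λ) k⁽ʲ⁾(λ) L(τʲ(λ)) (k⁽ʲ⁾(λ))⁻¹`. -/
def Bop (A : Type*) [CommRing A] [Algebra ℂ A] (n N : ℕ)
    (τ : ℂ → ℂ) (g : ℕ → ℂ → ℂ) (k : ℂ → Matrix (Fin n) (Fin n) ℂ)
    (L : ℂ → Matrix (Fin n) (Fin n) A) (lam : ℂ) : Matrix (Fin n) (Fin n) A :=
  ∑ j ∈ Finset.range N,
    g j lam • (cm A (kiter k τ j lam) * L (τ^[j] lam) * cm A ((kiter k τ j lam)⁻¹))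

/-!
The `(i, j)` summand of `{B_a(λ), B_b(μ)}` is the bracket of `L(τⁱλ)` and `L(τʲμ)` conjugated by
the constant matrices `k⁽ⁱ⁾(λ)` and `k⁽ʲ⁾(μ)`. Since the bracket is `ℂ`-bilinear, this conjugates
`{L_a, L_b}` by `k⁽ⁱ⁾_a(λ) k⁽ʲ⁾_b(μ)`, so the summand is the commutator of the conjugated
r-matrix `ρᵢⱼ` with `k⁽ⁱ⁾ L k⁽ⁱ⁾⁻¹` in leg `a` plus `k⁽ʲ⁾ L k⁽ʲ⁾⁻¹` in leg `b`. The weighted sum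
of `ρᵢⱼ` over `j` is `k⁽ⁱ⁾_a(λ) r̄(τⁱλ, μ) k⁽ⁱ⁾_a(λ)⁻¹`, which the iterated `N`-reflection
equation turns into `r̄(λ, μ)`; by skew-symmetry, `ρᵢⱼ(λ, μ) = -P ρⱼᵢ(μ, λ) P`, so the weighted
sum over `i` is `-P r̄(μ, λ) P`. Collecting terms by bilinearity of the commutator gives the claim.
-/

open Finset

theorem mul_commutator_mul {S : Type*} [Ring S] {c c' : S} (h : c' * c = 1) (x y : S) :
    c * (x * y - y * x) * c' = (c * x * c') * (c * y * c') - (c * y * c') * (c * x * c') := by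
  have cancel (z : S) : c' * (c * z) = z := by rw [← mul_assoc, h, one_mul]
  simp only [mul_sub, sub_mul, mul_assoc, cancel]

theorem sum_sum_smul_commutator {K S ι κ : Type*} [CommRing K] [Ring S] [Algebra K S]
    {s : Finset ι} {t : Finset κ} {a : ι → K} {b : κ → K} {ρ : ι → κ → S} {R₁ R₂ : S}
    (h₁ : ∀ i ∈ s, ∑ j ∈ t, b j • ρ i j = R₁) (h₂ : ∀ j ∈ t, ∑ i ∈ s, a i • ρ i j = R₂)
    (X : ι → S) (Y : κ → S) :
    ∑ i ∈ s, ∑ j ∈ t, a i • b j • (ρ i j * (X i + Y j) - (X i + Y j) * ρ i j)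
      = (R₁ * ∑ i ∈ s, a i • X i - (∑ i ∈ s, a i • X i) * R₁)
        + (R₂ * ∑ j ∈ t, b j • Y j - (∑ j ∈ t, b j • Y j) * R₂) := by
  let c : S →ₗ[K] S →ₗ[K] S := LinearMap.mul K S - (LinearMap.mul K S).flip
  have hc (x y : S) : x * y - y * x = c x y := rfl
  simp only [hc]
  calc ∑ i ∈ s, ∑ j ∈ t, a i • b j • c (ρ i j) (X i + Y j)
      = ∑ i ∈ s, a i • c (∑ j ∈ t, b j • ρ i j) (X i)
        + ∑ j ∈ t, b j • c (∑ i ∈ s, a i • ρ i j) (Y j) := by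
        simp only [map_add, sum_add_distrib, map_sum, LinearMap.sum_apply, map_smul,
          LinearMap.smul_apply, smul_add, smul_sum]
        refine congrArg₂ (· + ·) rfl ?_
        rw [sum_comm]
        simp only [smul_comm (a _) (b _)]
    _ = ∑ i ∈ s, a i • c R₁ (X i) + ∑ j ∈ t, b j • c R₂ (Y j) := by
        refine congrArg₂ (· + ·) (sum_congr rfl fun i hi => ?_) (sum_congr rfl fun j hj => ?_)
        · rw [h₁ i hi]
        · rw [h₂ j hj]
    _ = c R₁ (∑ i ∈ s, a i • X i) + c R₂ (∑ j ∈ t, b j • Y j) := by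
        simp only [map_sum, map_smul]

section Legs

variable {R : Type*} [CommRing R] {n : ℕ}

theorem legA_mul (x y : Matrix (Fin n) (Fin n) R) : legA n (x * y) = legA n x * legA n y := by
  simp [legA, ← mul_kronecker_mul]

theorem legA_sum {ι : Type*} (s : Finset ι) (f : ι → Matrix (Fin n) (Fin n) R) :
    legA n (∑ i ∈ s, f i) = ∑ i ∈ s, legA n (f i) := by
  ext
  simp [legA, Matrix.sum_apply, sum_mul]

theorem legB_sum {ι : Type*} (s : Finset ι) (f : ι → Matrix (Fin n) (Fin n) R) :
    legB n (∑ i ∈ s, f i) = ∑ i ∈ s, legB n (f i) := by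
  ext
  simp [legB, Matrix.sum_apply, mul_sum]

theorem legA_smul {K : Type*} [Monoid K] [MulAction K R] [IsScalarTower K R R] (c : K)
    (x : Matrix (Fin n) (Fin n) R) : legA n (c • x) = c • legA n x :=
  smul_kronecker _ _ _

theorem legB_smul {K : Type*} [Monoid K] [MulAction K R] [SMulCommClass K R R] (c : K)
    (x : Matrix (Fin n) (Fin n) R) : legB n (c • x) = c • legB n x :=
  kronecker_smul _ _ _

theorem legA_mul_legB (x y : Matrix (Fin n) (Fin n) R) :
    legA n x * legB n y = x ⊗ₖ y := by
  simp [legA, legB, ← mul_kronecker_mul]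

theorem legB_mul_legA (x y : Matrix (Fin n) (Fin n) R) :
    legB n y * legA n x = x ⊗ₖ y := by
  simp [legA, legB, ← mul_kronecker_mul]

theorem kronecker_mul_legA_mul_kronecker {u u' v v' : Matrix (Fin n) (Fin n) R}
    (hv : v * v' = 1) (x : Matrix (Fin n) (Fin n) R) :
    (u ⊗ₖ v) * legA n x * (u' ⊗ₖ v') = legA n (u * x * u') := by
  simp [legA, ← mul_kronecker_mul, hv]

theorem kronecker_mul_legB_mul_kronecker {u u' v v' : Matrix (Fin n) (Fin n) R}
    (hu : u * u' = 1) (y : Matrix (Fin n) (Fin n) R) :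
    (u ⊗ₖ v) * legB n y * (u' ⊗ₖ v') = legB n (v * y * v') := by
  simp [legB, ← mul_kronecker_mul, hu]

theorem legB_inv (x : Matrix (Fin n) (Fin n) R) : (legB n x)⁻¹ = legB n x⁻¹ := by
  simp [legB, inv_kronecker]

end Legs

theorem reindexAlgEquiv_prodComm_kronecker {R l m : Type*} [CommSemiring R] [Fintype l]
    [Fintype m] [DecidableEq l] [DecidableEq m] (x : Matrix l l R) (y : Matrix m m R) :
    reindexAlgEquiv R R (Equiv.prodComm l m) (x ⊗ₖ y) = y ⊗ₖ x := by
  ext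
  simp [mul_comm]

theorem Pmat_mul_mul_Pmat {n : ℕ} (M : Matrix (Fin n × Fin n) (Fin n × Fin n) ℂ) :
    Pmat n * M * Pmat n = reindexAlgEquiv ℂ ℂ (Equiv.prodComm _ _) M := by
  ext ⟨i, k⟩ ⟨j, l⟩
  simp [Pmat, mul_apply, Fintype.sum_prod_type, ite_and]

section ComplexCoefficients

variable {m : Type*} [Fintype m] [DecidableEq m]

theorem cm_mul (X Y : Matrix m m ℂ) : cm A (X * Y) = cm A X * cm A Y :=
  map_mul (Algebra.ofId ℂ A).mapMatrix X Y

theorem cm_one : cm A (1 : Matrix m m ℂ) = 1 :=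
  map_one (Algebra.ofId ℂ A).mapMatrix

theorem cm_neg (X : Matrix m m ℂ) : cm A (-X) = -cm A X :=
  map_neg (Algebra.ofId ℂ A).mapMatrix X

theorem cm_smul (c : ℂ) (X : Matrix m m ℂ) : cm A (c • X) = c • cm A X :=
  map_smul (Algebra.ofId ℂ A).mapMatrix c X

theorem cm_sum {ι : Type*} (s : Finset ι) (f : ι → Matrix m m ℂ) :
    cm A (∑ i ∈ s, f i) = ∑ i ∈ s, cm A (f i) :=
  map_sum (Algebra.ofId ℂ A).mapMatrix f s

theorem cm_mul_cm_nonsing_inv {U : Matrix m m ℂ} (hU : IsUnit U.det) :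
    cm A U * cm A U⁻¹ = 1 := by
  rw [← cm_mul, mul_nonsing_inv U hU, cm_one]

theorem cm_nonsing_inv_mul_cm {U : Matrix m m ℂ} (hU : IsUnit U.det) :
    cm A U⁻¹ * cm A U = 1 := by
  rw [← cm_mul, nonsing_inv_mul U hU, cm_one]

end ComplexCoefficients

theorem cm_kronecker {l m : Type*} (X : Matrix l l ℂ) (Y : Matrix m m ℂ) :
    cm A (X ⊗ₖ Y) = cm A X ⊗ₖ cm A Y := by
  ext
  simp [cm]

section Bracket

variable (br : A →ₗ[ℂ] A →ₗ[ℂ] A) {n : ℕ}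

theorem braMat_sum_smul_sum {ι κ : Type*} (s : Finset ι) (t : Finset κ) (a : ι → ℂ) (b : κ → ℂ)
    (X : ι → Matrix (Fin n) (Fin n) A) (Y : κ → Matrix (Fin n) (Fin n) A) :
    braMat A br (∑ i ∈ s, a i • X i) (∑ j ∈ t, b j • Y j)
      = ∑ i ∈ s, ∑ j ∈ t, a i • b j • braMat A br (X i) (Y j) := by
  ext
  simp only [braMat, of_apply, Matrix.sum_apply, Matrix.smul_apply, map_sum, map_smul,
    LinearMap.sum_apply, LinearMap.smul_apply, smul_sum]
  rw [sum_comm]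
  simp only [smul_comm (b _)]

theorem braMat_cm_mul_left (C : Matrix (Fin n) (Fin n) ℂ) (X Y : Matrix (Fin n) (Fin n) A) :
    braMat A br (cm A C * X) Y = legA n (cm A C) * braMat A br X Y := by
  ext ⟨i, k⟩ ⟨j, l⟩
  simp [braMat, legA, cm, mul_apply, Fintype.sum_prod_type, one_apply, ← Algebra.smul_def]

theorem braMat_mul_cm_left (C : Matrix (Fin n) (Fin n) ℂ) (X Y : Matrix (Fin n) (Fin n) A) :
    braMat A br (X * cm A C) Y = braMat A br X Y * legA n (cm A C) := by
  ext ⟨i, k⟩ ⟨j, l⟩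
  simp [braMat, legA, cm, mul_apply, Fintype.sum_prod_type, one_apply,
    mul_comm _ (algebraMap ℂ A _), ← Algebra.smul_def]

theorem braMat_cm_mul_right (C : Matrix (Fin n) (Fin n) ℂ) (X Y : Matrix (Fin n) (Fin n) A) :
    braMat A br X (cm A C * Y) = legB n (cm A C) * braMat A br X Y := by
  ext ⟨i, k⟩ ⟨j, l⟩
  simp [braMat, legB, cm, mul_apply, Fintype.sum_prod_type, one_apply, ← Algebra.smul_def]

theorem braMat_mul_cm_right (C : Matrix (Fin n) (Fin n) ℂ) (X Y : Matrix (Fin n) (Fin n) A) :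
    braMat A br X (Y * cm A C) = braMat A br X Y * legB n (cm A C) := by
  ext ⟨i, k⟩ ⟨j, l⟩
  simp [braMat, legB, cm, mul_apply, Fintype.sum_prod_type, one_apply,
    mul_comm _ (algebraMap ℂ A _), ← Algebra.smul_def]

theorem braMat_conj (U U' V V' : Matrix (Fin n) (Fin n) ℂ)
    (X Y : Matrix (Fin n) (Fin n) A) :
    braMat A br (cm A U * X * cm A U') (cm A V * Y * cm A V')
      = (cm A U ⊗ₖ cm A V) * braMat A br X Y * (cm A U' ⊗ₖ cm A V') := by
  rw [braMat_mul_cm_left, braMat_cm_mul_left, braMat_mul_cm_right, braMat_cm_mul_right,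
    ← legA_mul_legB, ← legB_mul_legA]
  simp only [mul_assoc]

theorem braMat_conj_of_eq_commutator {U V : Matrix (Fin n) (Fin n) ℂ}
    (hU : IsUnit U.det) (hV : IsUnit V.det)
    {ρ : Matrix (Fin n × Fin n) (Fin n × Fin n) ℂ} {X Y : Matrix (Fin n) (Fin n) A}
    (h : braMat A br X Y = cm A ρ * (legA n X + legB n Y) - (legA n X + legB n Y) * cm A ρ) :
    braMat A br (cm A U * X * cm A U⁻¹) (cm A V * Y * cm A V⁻¹)
      = cm A ((U ⊗ₖ V) * ρ * (U ⊗ₖ V)⁻¹)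
            * (legA n (cm A U * X * cm A U⁻¹) + legB n (cm A V * Y * cm A V⁻¹))
          - (legA n (cm A U * X * cm A U⁻¹) + legB n (cm A V * Y * cm A V⁻¹))
            * cm A ((U ⊗ₖ V) * ρ * (U ⊗ₖ V)⁻¹) := by
  have hinv : (cm A U⁻¹ ⊗ₖ cm A V⁻¹) * (cm A U ⊗ₖ cm A V) = 1 := by
    rw [← mul_kronecker_mul, cm_nonsing_inv_mul_cm hU, cm_nonsing_inv_mul_cm hV, one_kronecker_one]
  rw [braMat_conj, h, mul_commutator_mul hinv, mul_add, add_mul,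
    kronecker_mul_legA_mul_kronecker (cm_mul_cm_nonsing_inv hV),
    kronecker_mul_legB_mul_kronecker (cm_mul_cm_nonsing_inv hU),
    inv_kronecker, cm_mul, cm_mul, cm_kronecker, cm_kronecker]

end Bracket

section Reflection

variable {n N : ℕ} {r : ℂ → ℂ → Matrix (Fin n × Fin n) (Fin n × Fin n) ℂ} {τ : ℂ → ℂ}
  {g : ℕ → ℂ → ℂ} {k : ℂ → Matrix (Fin n) (Fin n) ℂ}

theorem isUnit_det_kiter (hk : ∀ ν : ℂ, IsUnit (k ν)) (j : ℕ) (ν : ℂ) :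
    IsUnit (kiter k τ j ν).det := by
  induction j with
  | zero => simp [kiter]
  | succ j ih =>
    rw [kiter, det_mul]
    exact ih.mul ((isUnit_iff_isUnit_det _).mp (hk _))

theorem rbar_mul_legA_kiter (hrefl : NRefl n N r τ g k) (i : ℕ) (lam ν : ℂ) :
    rbar n N r τ g k lam ν * legA n (kiter k τ i lam)
      = legA n (kiter k τ i lam) * rbar n N r τ g k (τ^[i] lam) ν := by
  induction i with
  | zero => simp [kiter, legA]
  | succ i ih =>
    rw [kiter, legA_mul, ← mul_assoc, ih, mul_assoc, hrefl, ← mul_assoc, ← legA_mul,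
      Function.iterate_succ_apply']

theorem legA_kiter_mul_rbar_mul_inv (hrefl : NRefl n N r τ g k) (hk : ∀ ν : ℂ, IsUnit (k ν))
    (i : ℕ) (lam ν : ℂ) :
    legA n (kiter k τ i lam) * rbar n N r τ g k (τ^[i] lam) ν * legA n (kiter k τ i lam)⁻¹
      = rbar n N r τ g k lam ν := by
  rw [← rbar_mul_legA_kiter hrefl, mul_assoc, ← legA_mul,
    mul_nonsing_inv _ (isUnit_det_kiter hk i lam), legA, one_kronecker_one, mul_one]

variable (n r τ k) in
/-- The matrix `ρᵢⱼ(λ, μ)` of the header. -/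
abbrev conjR (i j : ℕ) (lam mu : ℂ) : Matrix (Fin n × Fin n) (Fin n × Fin n) ℂ :=
  (kiter k τ i lam ⊗ₖ kiter k τ j mu) * r (τ^[i] lam) (τ^[j] mu)
    * (kiter k τ i lam ⊗ₖ kiter k τ j mu)⁻¹

theorem sum_smul_conjR_right (hrefl : NRefl n N r τ g k) (hk : ∀ ν : ℂ, IsUnit (k ν))
    (i : ℕ) (lam mu : ℂ) :
    ∑ j ∈ range N, g j mu • conjR n r τ k i j lam mu = rbar n N r τ g k lam mu := by
  have hterm (j : ℕ) : conjR n r τ k i j lam mu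
      = legA n (kiter k τ i lam)
        * (legB n (kiter k τ j mu) * r (τ^[i] lam) (τ^[j] mu) * (legB n (kiter k τ j mu))⁻¹)
        * legA n (kiter k τ i lam)⁻¹ := by
    rw [conjR, inv_kronecker, ← legA_mul_legB, ← legB_mul_legA, legB_inv]
    simp only [mul_assoc]
  rw [← legA_kiter_mul_rbar_mul_inv hrefl hk i lam mu, rbar, mul_sum, sum_mul]
  refine sum_congr rfl fun j _ => ?_
  rw [hterm, mul_smul_comm, smul_mul_assoc]

theorem conjR_eq_neg_swap (hskew : ∀ lam mu : ℂ, Pmat n * r mu lam * Pmat n = - r lam mu)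
    (i j : ℕ) (lam mu : ℂ) :
    conjR n r τ k i j lam mu
      = -reindexAlgEquiv ℂ ℂ (Equiv.prodComm _ _) (conjR n r τ k j i mu lam) := by
  rw [conjR, conjR, map_mul, map_mul, inv_kronecker, inv_kronecker,
    reindexAlgEquiv_prodComm_kronecker, reindexAlgEquiv_prodComm_kronecker, ← Pmat_mul_mul_Pmat,
    hskew, mul_neg, neg_mul, neg_neg]

theorem sum_smul_conjR_left (hrefl : NRefl n N r τ g k) (hk : ∀ ν : ℂ, IsUnit (k ν))
    (hskew : ∀ lam mu : ℂ, Pmat n * r mu lam * Pmat n = - r lam mu) (j : ℕ) (lam mu : ℂ) :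
    ∑ i ∈ range N, g i lam • conjR n r τ k i j lam mu
      = -(Pmat n * rbar n N r τ g k mu lam * Pmat n) := by
  simp only [conjR_eq_neg_swap hskew _ j, smul_neg, ← map_smul, sum_neg_distrib, ← map_sum,
    sum_smul_conjR_right hrefl hk, Pmat_mul_mul_Pmat]

end Reflection

theorem stmt16_general (n N : ℕ)
    (A : Type*) [CommRing A] [Algebra ℂ A]
    (br : A →ₗ[ℂ] A →ₗ[ℂ] A)
    (r : ℂ → ℂ → Matrix (Fin n × Fin n) (Fin n × Fin n) ℂ)
    (hskew : ∀ lam mu : ℂ, Pmat n * r mu lam * Pmat n = - r lam mu)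
    (τ : ℂ → ℂ) (g : ℕ → ℂ → ℂ)
    (k : ℂ → Matrix (Fin n) (Fin n) ℂ) (hk : ∀ ν : ℂ, IsUnit (k ν))
    (hrefl : NRefl n N r τ g k)
    (L : ℂ → Matrix (Fin n) (Fin n) A)
    (hL : ∀ lam mu : ℂ,
      braMat A br (L lam) (L mu)
        = cm A (r lam mu) * (legA n (L lam) + legB n (L mu))
          - (legA n (L lam) + legB n (L mu)) * cm A (r lam mu)) :
    ∀ lam mu : ℂ,
      braMat A br (Bop A n N τ g k L lam) (Bop A n N τ g k L mu)
        = (cm A (rbar n N r τ g k lam mu) * legA n (Bop A n N τ g k L lam)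
            - legA n (Bop A n N τ g k L lam) * cm A (rbar n N r τ g k lam mu))
          - (cm A (Pmat n * rbar n N r τ g k mu lam * Pmat n) * legB n (Bop A n N τ g k L mu)
            - legB n (Bop A n N τ g k L mu)
              * cm A (Pmat n * rbar n N r τ g k mu lam * Pmat n)) := by
  intro lam mu
  have hrow (i : ℕ) (_ : i ∈ range N) :
      ∑ j ∈ range N, g j mu • cm A (conjR n r τ k i j lam mu) = cm A (rbar n N r τ g k lam mu) := by
    simp only [← cm_smul, ← cm_sum, sum_smul_conjR_right hrefl hk]
  have hcol (j : ℕ) (_ : j ∈ range N) :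
      ∑ i ∈ range N, g i lam • cm A (conjR n r τ k i j lam mu)
        = -cm A (Pmat n * rbar n N r τ g k mu lam * Pmat n) := by
    simp only [← cm_smul, ← cm_sum, ← cm_neg, sum_smul_conjR_left hrefl hk hskew]
  simp only [Bop, braMat_sum_smul_sum,
    braMat_conj_of_eq_commutator br (isUnit_det_kiter hk _ _) (isUnit_det_kiter hk _ _) (hL _ _)]
  rw [sum_sum_smul_commutator hrow hcol]
  simp only [legA_sum, legA_smul, legB_sum, legB_smul, neg_mul, mul_neg]
  abel

/-- If `L` satisfies the linear Poisson relation
`{L_a(λ), L_b(μ)} = [r_{ab}(λ,μ), L_a(λ) + L_b(μ)]` for a skew-symmetric solution `r`,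
and `k` solves the `N`-reflection equation, then `B` satisfies
`{B_a(λ), B_b(μ)} = [r̄_{ab}(λ,μ), B_a(λ)] - [r̄_{ba}(μ,λ), B_b(μ)]`. -/
theorem stmt16 (n N : ℕ) (hn : 1 ≤ n) (hN : 1 ≤ N)
    (A : Type*) [CommRing A] [Algebra ℂ A]
    (br : A →ₗ[ℂ] A →ₗ[ℂ] A) (hanti : ∀ x y : A, br x y = - br y x)
    (r : ℂ → ℂ → Matrix (Fin n × Fin n) (Fin n × Fin n) ℂ)
    (hskew : ∀ lam mu : ℂ, Pmat n * r mu lam * Pmat n = - r lam mu)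
    (τ : ℂ → ℂ) (g : ℕ → ℂ → ℂ) (hg0 : ∀ ν : ℂ, g 0 ν = 1)
    (k : ℂ → Matrix (Fin n) (Fin n) ℂ) (hk : ∀ ν : ℂ, IsUnit (k ν))
    (hrefl : NRefl n N r τ g k)
    (L : ℂ → Matrix (Fin n) (Fin n) A)
    (hL : ∀ lam mu : ℂ,
      braMat A br (L lam) (L mu)
        = cm A (r lam mu) * (legA n (L lam) + legB n (L mu))
          - (legA n (L lam) + legB n (L mu)) * cm A (r lam mu)) :
    ∀ lam mu : ℂ,
      braMat A br (Bop A n N τ g k L lam) (Bop A n N τ g k L mu)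
        = (cm A (rbar n N r τ g k lam mu) * legA n (Bop A n N τ g k L lam)
            - legA n (Bop A n N τ g k L lam) * cm A (rbar n N r τ g k lam mu))
          - (cm A (Pmat n * rbar n N r τ g k mu lam * Pmat n) * legB n (Bop A n N τ g k L mu)
            - legB n (Bop A n N τ g k L mu)
              * cm A (Pmat n * rbar n N r τ g k mu lam * Pmat n)) :=
  stmt16_general n N A br r hskew τ g k hk hrefl L hL
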